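/- arXiv:2105.01977 — 2 statements merged into one kernel-verified Lean document; each statement's English description precedes it below -/
import Mathlib

section
/- Let Ω ⊆ ℝ^m be a set, u ∈ Ω a point such that the closed ball B(u, ε r_g) is contained in Ω, and p ∈ ℝ^m. Then sup over v ∈ Ω with |u-v| ≤ ε r_g of J_ε(u,v)·⟨v - u, p⟩ equals |p|, provided sup_{τ ∈ [0,r_g]} τ g(τ) is attained and equals C_g > 0. -/
open scoped RealInnerProductSpace

/-!
By Cauchy–Schwarz, `J_ε(u,v) ⟪v - u, p⟫ ≤ (t g(t) / C_g) ‖p‖` with `t = ‖u - v‖ / ε`, and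
`t g(t) ≤ C_g`. Equality is reached at `v = u + (ε τ₀ / ‖p‖) p`, where `τ₀` attains `C_g`.
-/

section InnerProductSpace

variable {E : Type*} [NormedAddCommGroup E] [InnerProductSpace ℝ E]

lemma inv_mul_mul_inner_le_norm {w p : E} {ε C c : ℝ} (hε : 0 < ε) (hC : 0 < C)
    (hc : 0 ≤ c) (hwc : ‖w‖ / ε * c ≤ C) :
    (ε * C)⁻¹ * c * ⟪w, p⟫ ≤ ‖p‖ :=
  calc (ε * C)⁻¹ * c * ⟪w, p⟫
      ≤ (ε * C)⁻¹ * c * (‖w‖ * ‖p‖) := by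
        gcongr
        exact real_inner_le_norm w p
    _ = (‖w‖ / ε * c) / C * ‖p‖ := by field_simp
    _ ≤ ‖p‖ := mul_le_of_le_one_left (norm_nonneg p) ((div_le_one hC).2 hwc)

lemma exists_norm_le_inv_mul_mul_inner_eq_norm (g : ℝ → ℝ) {ε τ C : ℝ} (hε : 0 < ε)
    (hτ : 0 ≤ τ) (hC : C ≠ 0) (hτC : τ * g τ = C) (p : E) :
    ∃ w : E, ‖w‖ ≤ ε * τ ∧ (ε * C)⁻¹ * g (‖w‖ / ε) * ⟪w, p⟫ = ‖p‖ := by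
  rcases eq_or_ne p 0 with rfl | hp
  · exact ⟨0, by simp; positivity, by simp⟩
  have hp' : ‖p‖ ≠ 0 := norm_ne_zero_iff.2 hp
  have hw : ‖(ε * τ / ‖p‖) • p‖ = ε * τ := by
    rw [norm_smul, Real.norm_of_nonneg (by positivity), div_mul_cancel₀ _ hp']
  refine ⟨(ε * τ / ‖p‖) • p, hw.le, ?_⟩
  rw [hw, mul_div_cancel_left₀ _ hε.ne', real_inner_smul_left, real_inner_self_eq_norm_sq,
    ← hτC]
  field_simp
  exact div_self (hτC ▸ hC)

end InnerProductSpace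

theorem stmt_3_general {m : ℕ} (g : ℝ → ℝ) (C_g r_g ε : ℝ)
    (hε : 0 < ε) (hC_pos : 0 < C_g)
    (hg_nonneg : ∀ t, 0 ≤ t → 0 ≤ g t)
    (hC_ub : ∀ τ ∈ Set.Icc (0:ℝ) r_g, τ * g τ ≤ C_g)
    (hC_attained : ∃ τ ∈ Set.Icc (0:ℝ) r_g, τ * g τ = C_g)
    (Ω : Set (EuclideanSpace ℝ (Fin m)))
    (u : EuclideanSpace ℝ (Fin m))
    (hball : Metric.closedBall u (ε * r_g) ⊆ Ω)
    (p : EuclideanSpace ℝ (Fin m)) :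
    sSup {x : ℝ | ∃ v ∈ Ω, ‖u - v‖ ≤ ε * r_g ∧
        x = ((ε * C_g)⁻¹ * g (‖u - v‖ / ε)) * ⟪v - u, p⟫} = ‖p‖ := by
  obtain ⟨τ₀, ⟨hτ₀, hτ₀r⟩, hτ₀C⟩ := hC_attained
  obtain ⟨w, hw, hwp⟩ :=
    exists_norm_le_inv_mul_mul_inner_eq_norm g hε hτ₀ hC_pos.ne' hτ₀C p
  have hwr : ‖w‖ ≤ ε * r_g := hw.trans (by gcongr)
  refine IsGreatest.csSup_eq ⟨⟨u + w, hball ?_, ?_, ?_⟩, ?_⟩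
  · rwa [Metric.mem_closedBall, dist_self_add_left]
  · rwa [sub_add_cancel_left, norm_neg]
  · rw [sub_add_cancel_left, norm_neg, add_sub_cancel_left, hwp]
  · rintro _ ⟨v, -, hv, rfl⟩
    rw [norm_sub_rev] at hv ⊢
    exact inv_mul_mul_inner_le_norm hε hC_pos (hg_nonneg _ (by positivity))
      (hC_ub _ ⟨by positivity, (div_le_iff₀' hε).2 hv⟩)

/-- If the closed ball `B(u, ε r_g)` is contained in `Ω`, and
`C_g = sup_{τ ∈ [0,r_g]} τ g(τ) > 0` is attained, then
`sup { J_ε(u,v) ⟪v - u, p⟫ : v ∈ Ω, ‖u-v‖ ≤ ε r_g } = ‖p‖`,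
where `J_ε(u,v) = (ε C_g)⁻¹ g(‖u-v‖/ε)`. -/
theorem stmt_3 {m : ℕ} (g : ℝ → ℝ) (C_g r_g ε : ℝ)
    (hε : 0 < ε) (hr : 0 < r_g) (hC_pos : 0 < C_g)
    (hg_nonneg : ∀ t, 0 ≤ t → 0 ≤ g t)
    (hg_supp : ∀ t, 0 ≤ t → r_g < t → g t = 0)
    (hg_cont : ContinuousOn g (Set.Icc 0 r_g))
    (hC_ub : ∀ τ ∈ Set.Icc (0:ℝ) r_g, τ * g τ ≤ C_g)
    (hC_attained : ∃ τ ∈ Set.Icc (0:ℝ) r_g, τ * g τ = C_g)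
    (Ω : Set (EuclideanSpace ℝ (Fin m)))
    (u : EuclideanSpace ℝ (Fin m)) (hu : u ∈ Ω)
    (hball : Metric.closedBall u (ε * r_g) ⊆ Ω)
    (p : EuclideanSpace ℝ (Fin m)) :
    sSup {x : ℝ | ∃ v ∈ Ω, ‖u - v‖ ≤ ε * r_g ∧
        x = ((ε * C_g)⁻¹ * g (‖u - v‖ / ε)) * ⟪v - u, p⟫} = ‖p‖ :=
  stmt_3_general g C_g r_g ε hε hC_pos hg_nonneg hC_ub hC_attained Ω u hball p
end

section
/- Comparison principle for the explicit Euler scheme: Let Ω̃ be a finite set, Γ̃ ⊆ Ω̃, and J : Ω̃ × Ω̃ → [0,∞) with Δt·J(u,v) ≤ 1 for all u,v. Suppose f, g : Ω̃ × {t₀,…,t_N} → ℝ satisfy, for all u ∈ Ω̃∖Γ̃ and i ≥ 1: (f(u,tᵢ) − f(u,tᵢ₋₁))/Δt ≤ −max_v J(u,v)(f(u,tᵢ₋₁) − f(v,tᵢ₋₁)) + P̃(u), and the reverse inequality with ≥ for g, and f ≤ g on (Γ̃ × {t₁,…,t_N}) ∪ (Ω̃ × {t₀}). Then f ≤ g on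 all of Ω̃ × {t₀,…,t_N}. -/
/-!
Write the explicit scheme as `a ↦ eulerStep a + Δt P`. Since
`a u - Δt J(u,v) (a u - a v) = (1 - Δt J(u,v)) a u + Δt J(u,v) a v`, the CFL condition makes
`eulerStep a u` a minimum of convex combinations of values of `a`, so it is monotone in `a`. A
sub-solution lies below one step of the scheme applied to itself and a super-solution above it,
so `f ≤ g` propagates from one time level to the next by induction on time.
-/

section

variable {ι : Type*}

/-- The explicit Euler update of the nonlocal Eikonal scheme at `u`, without the source term. -/
noncomputable def eulerStep (s : Finset ι) (hs : s.Nonempty) (J : ι → ι → ℝ) (Δt : ℝ)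
    (a : ι → ℝ) (u : ι) : ℝ :=
  a u - Δt * s.sup' hs fun v => J u v * (a u - a v)

variable {s : Finset ι} (hs : s.Nonempty) {J : ι → ι → ℝ} {Δt : ℝ}

theorem eulerStep_mono {a b : ι → ℝ} {u : ι} (hΔt : 0 ≤ Δt) (hJ : ∀ v ∈ s, 0 ≤ J u v)
    (hCFL : ∀ v ∈ s, Δt * J u v ≤ 1) (hab : ∀ v ∈ s, a v ≤ b v) (hu : u ∈ s) :
    eulerStep s hs J Δt a u ≤ eulerStep s hs J Δt b u := by
  obtain ⟨v, hv, hsup⟩ := s.exists_mem_eq_sup' hs fun v => J u v * (b u - b v)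
  have hweight : 0 ≤ Δt * J u v := mul_nonneg hΔt (hJ v hv)
  have hweight' : 0 ≤ 1 - Δt * J u v := sub_nonneg.mpr (hCFL v hv)
  calc eulerStep s hs J Δt a u ≤ a u - Δt * (J u v * (a u - a v)) := by
        unfold eulerStep
        gcongr
        exact s.le_sup' (fun v => J u v * (a u - a v)) hv
    _ = (1 - Δt * J u v) * a u + Δt * J u v * a v := by ring
    _ ≤ (1 - Δt * J u v) * b u + Δt * J u v * b v := by
        gcongr
        · exact hab u hu
        · exact hab v hv
    _ = eulerStep s hs J Δt b u := by rw [eulerStep, hsup]; ring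

theorem le_eulerStep_add_of_div_le {a : ι → ℝ} {u : ι} {x p : ℝ} (hΔt : 0 < Δt)
    (h : (x - a u) / Δt ≤ -(s.sup' hs fun v => J u v * (a u - a v)) + p) :
    x ≤ eulerStep s hs J Δt a u + Δt * p := by
  rw [div_le_iff₀ hΔt] at h
  unfold eulerStep
  linarith

theorem eulerStep_add_le_of_le_div {a : ι → ℝ} {u : ι} {x p : ℝ} (hΔt : 0 < Δt)
    (h : (x - a u) / Δt ≥ -(s.sup' hs fun v => J u v * (a u - a v)) + p) :
    eulerStep s hs J Δt a u + Δt * p ≤ x := by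
  rw [ge_iff_le, le_div_iff₀ hΔt] at h
  unfold eulerStep
  linarith

end

theorem stmt_12_general {ι : Type*} (Ωt Γt : Finset ι)
    (hne : Ωt.Nonempty)
    (J : ι → ι → ℝ) (hJ : ∀ u v, 0 ≤ J u v)
    (Δt : ℝ) (hΔt : 0 < Δt) (hCFL : ∀ u v, Δt * J u v ≤ 1)
    (Pt : ι → ℝ) (N : ℕ)
    (f g : ι → ℕ → ℝ)
    (hf : ∀ u ∈ Ωt, u ∉ Γt → ∀ i, 1 ≤ i → i ≤ N →
      (f u i - f u (i - 1)) / Δt ≤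
        -(Ωt.sup' hne fun v => J u v * (f u (i - 1) - f v (i - 1))) + Pt u)
    (hg : ∀ u ∈ Ωt, u ∉ Γt → ∀ i, 1 ≤ i → i ≤ N →
      (g u i - g u (i - 1)) / Δt ≥
        -(Ωt.sup' hne fun v => J u v * (g u (i - 1) - g v (i - 1))) + Pt u)
    (hbdryΓ : ∀ u ∈ Γt, ∀ i, 1 ≤ i → i ≤ N → f u i ≤ g u i)
    (hbdry0 : ∀ u ∈ Ωt, f u 0 ≤ g u 0) :
    ∀ u ∈ Ωt, ∀ i, i ≤ N → f u i ≤ g u i := by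
  intro u hu i hiN
  induction i generalizing u with
  | zero => exact hbdry0 u hu
  | succ n ih =>
    by_cases hΓu : u ∈ Γt
    · exact hbdryΓ u hΓu (n + 1) (by omega) hiN
    · have hprev : ∀ v ∈ Ωt, f v n ≤ g v n := fun v hv => ih v hv (by omega)
      calc f u (n + 1)
          ≤ eulerStep Ωt hne J Δt (f · n) u + Δt * Pt u :=
            le_eulerStep_add_of_div_le hne hΔt (hf u hu hΓu (n + 1) (by omega) hiN)
        _ ≤ eulerStep Ωt hne J Δt (g · n) u + Δt * Pt u := by
            gcongr
            exact eulerStep_mono hne hΔt.le (fun v _ => hJ u v) (fun v _ => hCFL u v) hprev hu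
        _ ≤ g u (n + 1) :=
            eulerStep_add_le_of_le_div hne hΔt (hg u hu hΓu (n + 1) (by omega) hiN)

/-- Comparison principle for the explicit Euler scheme: if `f` is a discrete
sub-solution and `g` a discrete super-solution of the forward-Euler nonlocal
Eikonal scheme (with the CFL condition `Δt J(u,v) ≤ 1`), and `f ≤ g` on the
parabolic boundary, then `f ≤ g` everywhere. -/
theorem stmt_12 {ι : Type*} (Ωt Γt : Finset ι) (hΓ : Γt ⊆ Ωt)
    (hne : Ωt.Nonempty)
    (J : ι → ι → ℝ) (hJ : ∀ u v, 0 ≤ J u v)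
    (Δt : ℝ) (hΔt : 0 < Δt) (hCFL : ∀ u v, Δt * J u v ≤ 1)
    (Pt : ι → ℝ) (N : ℕ)
    (f g : ι → ℕ → ℝ)
    (hf : ∀ u ∈ Ωt, u ∉ Γt → ∀ i, 1 ≤ i → i ≤ N →
      (f u i - f u (i - 1)) / Δt ≤
        -(Ωt.sup' hne fun v => J u v * (f u (i - 1) - f v (i - 1))) + Pt u)
    (hg : ∀ u ∈ Ωt, u ∉ Γt → ∀ i, 1 ≤ i → i ≤ N →
      (g u i - g u (i - 1)) / Δt ≥
        -(Ωt.sup' hne fun v => J u v * (g u (i - 1) - g v (i - 1))) + Pt u)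
    (hbdryΓ : ∀ u ∈ Γt, ∀ i, 1 ≤ i → i ≤ N → f u i ≤ g u i)
    (hbdry0 : ∀ u ∈ Ωt, f u 0 ≤ g u 0) :
    ∀ u ∈ Ωt, ∀ i, i ≤ N → f u i ≤ g u i :=
  stmt_12_general Ωt Γt hne J hJ Δt hΔt hCFL Pt N f g hf hg hbdryΓ hbdry0
end
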